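/- Let T be a triangle contained in the first quadrant with one vertical side lying on the line x = a, where 0 ≤ a < 1, and third vertex at (1,0). Then the average distance from the origin to points of T is strictly greater than 1/3. -/

import Mathlib

/-!
Since `dist 0 q ≥ q 0`, with equality only on the horizontal axis (a null set), the average
distance to the origin strictly exceeds the average abscissa over `T`. The latter is the abscissa
`(1 + 2a) / 3` of the centroid, which is at least `1 / 3`. It is computed by slicing `T` vertically:
the slice over `x ∈ [a, 1]` has length `(y₂ - y₁) (1 - x) / (1 - a)`.
-/

open MeasureTheory Real Set

section RegionBetween

variable {α : Type*}

theorem isCompact_region_between_cc [TopologicalSpace α] {f g : α → ℝ} {s : Set α}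
    (hf : Continuous f) (hg : Continuous g) (hs : IsCompact s) :
    IsCompact {p : α × ℝ | p.1 ∈ s ∧ p.2 ∈ Icc (f p.1) (g p.1)} := by
  obtain ⟨m, hm⟩ := hs.bddBelow_image hf.continuousOn
  obtain ⟨M, hM⟩ := hs.bddAbove_image hg.continuousOn
  have hclosed : IsClosed {p : α × ℝ | f p.1 ≤ p.2 ∧ p.2 ≤ g p.1} :=
    (isClosed_le (by fun_prop) continuous_snd).inter (isClosed_le continuous_snd (by fun_prop))
  convert (hs.prod (isCompact_Icc (a := m) (b := M))).inter_right hclosed using 1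
  ext ⟨x, y⟩
  simp only [mem_ofPred_eq, mem_Icc, mem_inter_iff, mem_prod]
  constructor
  · rintro ⟨hx, hfy, hyg⟩
    exact ⟨⟨hx, (hm ⟨x, hx, rfl⟩).trans hfy, hyg.trans (hM ⟨x, hx, rfl⟩)⟩, hfy, hyg⟩
  · rintro ⟨⟨hx, -⟩, hfy, hyg⟩
    exact ⟨hx, hfy, hyg⟩

theorem setIntegral_region_between_cc_comp_fst [MeasurableSpace α] {μ : Measure α}
    [SFinite μ] {f g h : α → ℝ} {s : Set α} (hf : Measurable f) (hg : Measurable g)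
    (hs : MeasurableSet s) (hfg : ∀ x ∈ s, f x ≤ g x)
    (hint : IntegrableOn (fun p : α × ℝ => h p.1)
      {p | p.1 ∈ s ∧ p.2 ∈ Icc (f p.1) (g p.1)} (μ.prod volume)) :
    ∫ p in {p : α × ℝ | p.1 ∈ s ∧ p.2 ∈ Icc (f p.1) (g p.1)}, h p.1 ∂(μ.prod volume) =
      ∫ x in s, h x * (g x - f x) ∂μ := by
  have hR := measurableSet_region_between_cc hf hg hs
  rw [← integral_indicator hR, integral_prod _ ((integrable_indicator_iff hR).2 hint),
    ← integral_indicator hs]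
  congr 1
  funext x
  by_cases hx : x ∈ s
  · have hslice : (fun y => {p : α × ℝ | p.1 ∈ s ∧ p.2 ∈ Icc (f p.1) (g p.1)}.indicator
        (fun p => h p.1) (x, y)) = (Icc (f x) (g x)).indicator (fun _ => h x) := by
      funext y
      by_cases hy : y ∈ Icc (f x) (g x)
      · have hxy : (x, y) ∈ {p : α × ℝ | p.1 ∈ s ∧ p.2 ∈ Icc (f p.1) (g p.1)} := ⟨hx, hy⟩
        rw [indicator_of_mem hy, indicator_of_mem hxy]
      · rw [indicator_of_notMem (fun hxy => hy hxy.2), indicator_of_notMem hy]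
    rw [hslice, integral_indicator_const _ measurableSet_Icc, indicator_of_mem hx,
      Real.volume_real_Icc_of_le (hfg x hx), smul_eq_mul, mul_comm]
  · simp [hx]

end RegionBetween

theorem volume_setOf_snd_eq_zero : volume {p : ℝ × ℝ | p.2 = 0} = 0 := by
  rw [show {p : ℝ × ℝ | p.2 = 0} = univ ×ˢ {0} by ext; simp, Measure.volume_eq_prod,
    Measure.prod_prod, Real.volume_singleton, mul_zero]

theorem fst_le_sqrt_fst_sq_add_snd_sq (p : ℝ × ℝ) : p.1 ≤ √(p.1 ^ 2 + p.2 ^ 2) :=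
  (le_abs_self _).trans <| (sqrt_sq_eq_abs _).symm.trans_le <|
    sqrt_le_sqrt (le_add_of_nonneg_right (sq_nonneg _))

theorem fst_lt_sqrt_fst_sq_add_snd_sq {p : ℝ × ℝ} (hp : p.2 ≠ 0) :
    p.1 < √(p.1 ^ 2 + p.2 ^ 2) :=
  (le_abs_self _).trans_lt <| (sqrt_sq_eq_abs _).symm.trans_lt <|
    sqrt_lt_sqrt (sq_nonneg _) (lt_add_of_pos_right _ (by positivity))

theorem setIntegral_fst_lt_setIntegral_sqrt {S : Set (ℝ × ℝ)} (hS : IsCompact S)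
    (hS0 : volume S ≠ 0) : ∫ p in S, p.1 < ∫ p in S, √(p.1 ^ 2 + p.2 ^ 2) := by
  have hfst : IntegrableOn (fun p : ℝ × ℝ => p.1) S :=
    continuous_fst.continuousOn.integrableOn_compact hS
  have hsqrt : IntegrableOn (fun p : ℝ × ℝ => √(p.1 ^ 2 + p.2 ^ 2)) S :=
    (by fun_prop : Continuous fun p : ℝ × ℝ => √(p.1 ^ 2 + p.2 ^ 2)).continuousOn
      |>.integrableOn_compact hS
  rw [← sub_pos, ← integral_sub hsqrt hfst, setIntegral_pos_iff_support_of_nonneg_ae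
    (ae_of_all _ fun p => sub_nonneg.2 (fst_le_sqrt_fst_sq_add_snd_sq p)) (hsqrt.sub hfst)]
  calc 0 < volume S := pos_iff_ne_zero.2 hS0
    _ = volume (S \ {p | p.2 = 0}) :=
      (measure_sdiff_null volume_setOf_snd_eq_zero).symm
    _ ≤ volume (Function.support _ ∩ S) := measure_mono fun p hp =>
      ⟨(sub_pos.2 (fst_lt_sqrt_fst_sq_add_snd_sq hp.2)).ne', hp.1⟩

def triangleRegion (a y₁ y₂ : ℝ) : Set (ℝ × ℝ) :=
  {p | p.1 ∈ Icc a 1 ∧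
    p.2 ∈ Icc (y₁ * ((1 - p.1) / (1 - a))) (y₂ * ((1 - p.1) / (1 - a)))}

theorem mem_convexHull_triangle_iff {a y₁ y₂ : ℝ} (ha : a < 1) (hy : y₁ ≤ y₂)
    (q : EuclideanSpace ℝ (Fin 2)) :
    q ∈ convexHull ℝ {!₂[a, y₁], !₂[a, y₂], !₂[1, 0]} ↔ (q 0, q 1) ∈ triangleRegion a y₁ y₂ := by
  have ha' : 0 < 1 - a := sub_pos.2 ha
  rw [pair_comm, insert_comm, convexHull_insert (by simp), convexJoin_singleton_left,
    convexHull_pair, mem_iUnion₂]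
  simp only [segment_eq_image, mem_image]
  constructor
  · rintro ⟨_, ⟨t, ⟨ht0, ht1⟩, rfl⟩, s, ⟨hs0, hs1⟩, hq⟩
    have hq0 : q 0 = 1 - s * (1 - a) := by rw [← hq]; simp; ring
    have hq1 : q 1 = s * ((1 - t) * y₁ + t * y₂) := by rw [← hq]; simp; ring
    have hscale : (1 - q 0) / (1 - a) = s := by rw [hq0]; field_simp; ring
    simp only [triangleRegion, mem_ofPred_eq, mem_Icc, hscale]
    rw [hq0, hq1]
    have hst : 0 ≤ s * t * (y₂ - y₁) := by have := sub_nonneg.2 hy; positivity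
    have hst' : 0 ≤ s * (1 - t) * (y₂ - y₁) := by
      have := sub_nonneg.2 hy; have := sub_nonneg.2 ht1; positivity
    refine ⟨⟨?_, ?_⟩, ?_, ?_⟩ <;> nlinarith
  · rintro ⟨⟨h0, h1⟩, h2, h3⟩
    set s := (1 - q 0) / (1 - a)
    have hs0 : 0 ≤ s := div_nonneg (by linarith) ha'.le
    have hs1 : s ≤ 1 := (div_le_one ha').2 (by linarith)
    have hs : s * (1 - a) = 1 - q 0 := div_mul_cancel₀ _ ha'.ne'
    set t := (q 1 - y₁ * s) / (s * (y₂ - y₁))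
    have ht0 : 0 ≤ t := div_nonneg (by linarith) (mul_nonneg hs0 (by linarith))
    have ht1 : t ≤ 1 := div_le_one_of_le₀ (by linarith) (mul_nonneg hs0 (by linarith))
    -- if `s * (y₂ - y₁) = 0` then `t` is the junk value `0`, but then also `q 1 = y₁ * s`
    have hst : t * (s * (y₂ - y₁)) = q 1 - y₁ * s := div_mul_cancel_of_imp fun h => by
      rcases mul_eq_zero.1 h with h | h <;> nlinarith
    clear_value t s
    refine ⟨_, ⟨t, ⟨ht0, ht1⟩, rfl⟩, s, ⟨hs0, hs1⟩, ?_⟩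
    ext i
    fin_cases i
    · simp; linear_combination -hs
    · simp; linear_combination hst

theorem isCompact_triangleRegion (a y₁ y₂ : ℝ) : IsCompact (triangleRegion a y₁ y₂) :=
  isCompact_region_between_cc (f := fun x => y₁ * ((1 - x) / (1 - a)))
    (g := fun x => y₂ * ((1 - x) / (1 - a))) (by fun_prop) (by fun_prop) isCompact_Icc

theorem setIntegral_triangleRegion_comp_fst {a y₁ y₂ : ℝ} (ha : a < 1) (hy : y₁ ≤ y₂)
    {h : ℝ → ℝ} (hh : Continuous h) :
    ∫ p in triangleRegion a y₁ y₂, h p.1 =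
      (y₂ - y₁) / (1 - a) * ∫ x in a..1, h x * (1 - x) := by
  have hfg : ∀ x ∈ Icc a 1, y₁ * ((1 - x) / (1 - a)) ≤ y₂ * ((1 - x) / (1 - a)) :=
    fun x hx => mul_le_mul_of_nonneg_right hy (div_nonneg (by linarith [hx.2]) (by linarith))
  have hint : IntegrableOn (fun p : ℝ × ℝ => h p.1) (triangleRegion a y₁ y₂) :=
    (hh.comp continuous_fst).continuousOn.integrableOn_compact
      (isCompact_triangleRegion a y₁ y₂)
  rw [Measure.volume_eq_prod, triangleRegion, setIntegral_region_between_cc_comp_fst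
      (by fun_prop) (by fun_prop) measurableSet_Icc hfg hint,
    integral_Icc_eq_integral_Ioc, ← intervalIntegral.integral_of_le ha.le,
    ← intervalIntegral.integral_const_mul]
  congr 1
  funext x
  ring

theorem measureReal_triangleRegion {a y₁ y₂ : ℝ} (ha : a < 1) (hy : y₁ ≤ y₂) :
    volume.real (triangleRegion a y₁ y₂) = (y₂ - y₁) * (1 - a) / 2 := by
  have h := setIntegral_triangleRegion_comp_fst ha hy (h := fun _ => 1) continuous_const
  rw [setIntegral_const, smul_eq_mul, mul_one] at h
  rw [h]
  simp only [one_mul]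
  rw [intervalIntegral.integral_sub (by simp) (by simp), integral_id, integral_one]
  field_simp [(sub_pos.2 ha).ne']
  ring

theorem setIntegral_fst_triangleRegion {a y₁ y₂ : ℝ} (ha : a < 1) (hy : y₁ ≤ y₂) :
    ∫ p in triangleRegion a y₁ y₂, p.1 =
      (1 + 2 * a) / 3 * volume.real (triangleRegion a y₁ y₂) := by
  refine (setIntegral_triangleRegion_comp_fst ha hy continuous_id).trans ?_
  rw [measureReal_triangleRegion ha hy]
  simp only [id, mul_sub, mul_one, ← sq]
  rw [intervalIntegral.integral_sub (by simp) (by simp), integral_id, integral_pow]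
  field_simp [(sub_pos.2 ha).ne']
  ring

def euclideanToProd : EuclideanSpace ℝ (Fin 2) ≃ᵐ ℝ × ℝ :=
  (MeasurableEquiv.toLp 2 (Fin 2 → ℝ)).symm.trans MeasurableEquiv.finTwoArrow

theorem euclideanToProd_apply (q : EuclideanSpace ℝ (Fin 2)) :
    euclideanToProd q = (q 0, q 1) :=
  rfl

theorem measurePreserving_euclideanToProd : MeasurePreserving euclideanToProd :=
  (volume_preserving_finTwoArrow ℝ).comp
    (EuclideanSpace.volume_preserving_symm_measurableEquiv_toLp (Fin 2))

theorem dist_zero_eq_sqrt_euclideanToProd (q : EuclideanSpace ℝ (Fin 2)) :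
    dist 0 q = √((euclideanToProd q).1 ^ 2 + (euclideanToProd q).2 ^ 2) := by
  rw [EuclideanSpace.dist_eq]
  simp [Fin.sum_univ_two, euclideanToProd_apply]

theorem triangle_vertical_side_avg_dist_gt_third_general (a y₁ y₂ : ℝ)
    (ha0 : 0 ≤ a) (ha1 : a < 1) (hy : y₁ < y₂)
    (T : Set (EuclideanSpace ℝ (Fin 2)))
    (hT : T = convexHull ℝ {!₂[a, y₁], !₂[a, y₂], !₂[1, 0]}) :
    (1 : ℝ) / 3 < (∫ q in T, dist (0 : EuclideanSpace ℝ (Fin 2)) q) / (volume T).toReal := by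
  set S := triangleRegion a y₁ y₂
  have hTS : T = euclideanToProd ⁻¹' S := by
    ext q
    rw [hT]
    exact mem_convexHull_triangle_iff ha1 hy.le q
  have hS : 0 < volume.real S := by
    rw [measureReal_triangleRegion ha1 hy.le]
    exact div_pos (mul_pos (sub_pos.2 hy) (sub_pos.2 ha1)) two_pos
  have hlt := setIntegral_fst_lt_setIntegral_sqrt (isCompact_triangleRegion a y₁ y₂)
    (ENNReal.toReal_ne_zero.1 hS.ne').1
  rw [setIntegral_fst_triangleRegion ha1 hy.le] at hlt
  simp_rw [hTS, dist_zero_eq_sqrt_euclideanToProd]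
  rw [measurePreserving_euclideanToProd.setIntegral_preimage_emb
      euclideanToProd.measurableEmbedding (fun p => √(p.1 ^ 2 + p.2 ^ 2)),
    measurePreserving_euclideanToProd.measure_preimage_equiv, ← measureReal_def,
    lt_div_iff₀ hS]
  nlinarith

/-- Let `T` be a triangle contained in the first quadrant with a vertical side on the
line `x = a`, where `0 ≤ a < 1`, and third vertex `(1,0)`. Then the average distance
from the origin to the points of `T` is strictly greater than `1/3`. -/
theorem triangle_vertical_side_avg_dist_gt_third (a y₁ y₂ : ℝ)
    (ha0 : 0 ≤ a) (ha1 : a < 1) (hy₁ : 0 ≤ y₁) (hy : y₁ < y₂)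
    (T : Set (EuclideanSpace ℝ (Fin 2)))
    (hT : T = convexHull ℝ {!₂[a, y₁], !₂[a, y₂], !₂[1, 0]}) :
    (1 : ℝ) / 3 < (∫ q in T, dist (0 : EuclideanSpace ℝ (Fin 2)) q) / (volume T).toReal :=
  triangle_vertical_side_avg_dist_gt_third_general a y₁ y₂ ha0 ha1 hy T hT
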